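/- Let G be a countable left-orderable group. Then there exists an injective group homomorphism h : G → Homeo₊(ℝ) such that: (a) h(g)(0) = 0 for every g ∈ G; and (b) for every g ≠ e in G, the germ of h(g) at 0 is nontrivial, i.e. there is no neighborhood of 0 on which h(g) restricts to the identity. -/

import Mathlib

/-!
A left order on `G` makes left multiplication a free action by order automorphisms on `G ×ₗ ℚ`,
a countable dense linear order without endpoints, hence order isomorphic to `ℚ` by Cantor's
theorem. Order automorphisms of `ℚ` extend to order automorphisms, hence homeomorphisms, of `ℝ`.
Transporting these to `(0, ∞)` along `exp` and extending them by the identity on `(-∞, 0]` fixes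
`0`; a nontrivial element moves every rational `q`, so its image moves every `exp q`, and these
accumulate at `0`.
-/

open Filter Topology Set

def HomeoPlusReal : Subgroup (Equiv.Perm ℝ) where
  carrier := {f | Continuous f ∧ Continuous f.symm ∧ StrictMono f}
  one_mem' := by
    refine ⟨continuous_id, ?_, fun a b h => h⟩
    exact continuous_id
  mul_mem' := by
    rintro a b ⟨ha1, ha2, ha3⟩ ⟨hb1, hb2, hb3⟩
    refine ⟨?_, ?_, ?_⟩
    · simpa [Equiv.Perm.coe_mul] using ha1.comp hb1
    · have : Continuous (⇑b.symm ∘ ⇑a.symm) := hb2.comp ha2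
      simpa [Equiv.Perm.mul_def, Equiv.symm_trans_apply, Function.comp] using this
    · intro x y h
      simpa [Equiv.Perm.coe_mul] using ha3 (hb3 h)
  inv_mem' := by
    rintro a ⟨ha1, ha2, ha3⟩
    refine ⟨by simpa using ha2, by exact ha1, ?_⟩
    intro x y h
    have h2 := ha3.lt_iff_lt (a := a.symm x) (b := a.symm y)
    simp only [Equiv.apply_symm_apply] at h2
    simpa using h2.mp h

/-- A group is left-orderable if it admits a linear order invariant under
left multiplication: `g ≺ h` implies `f * g ≺ f * h`. -/
def IsLeftOrderable (G : Type*) [Group G] : Prop :=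
  ∃ r : LinearOrder G, ∀ f g h : G, r.lt g h → r.lt (f * g) (f * h)

namespace OrderIso

variable {α β : Type*}

def autCongr [LE α] [LE β] (e : α ≃o β) : (α ≃o α) ≃* (β ≃o β) where
  toFun f := e.symm.trans (f.trans e)
  invFun f := e.trans (f.trans e.symm)
  left_inv f := by ext; simp
  right_inv f := by ext; simp
  map_mul' f g := by ext; simp [RelIso.mul_apply]

@[simp]
theorem autCongr_apply [LE α] [LE β] (e : α ≃o β) (f : α ≃o α) (b : β) :
    autCongr e f b = e (f (e.symm b)) := rfl

def sumLexCongrRightHom [LE α] [LE β] : (β ≃o β) →* (α ⊕ₗ β ≃o α ⊕ₗ β) where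
  toFun f := sumLexCongr (OrderIso.refl α) f
  map_one' := by ext; simp
  map_mul' f g := by ext; simp [RelIso.mul_apply]

/-- The identity on `Iic a`, and `f` transported along `e` on `Ioi a`. -/
def extendIoi [LinearOrder α] [LE β] (a : α) (e : β ≃o Ioi a) :
    (β ≃o β) →* (α ≃o α) :=
  (autCongr (sumLexIicIoi a)).toMonoidHom.comp (sumLexCongrRightHom.comp (autCongr e).toMonoidHom)

theorem extendIoi_apply_of_le [LinearOrder α] [LE β] {a : α} (e : β ≃o Ioi a) (f : β ≃o β)
    {x : α} (hx : x ≤ a) : extendIoi a e f x = x := by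
  simp [extendIoi, sumLexIicIoi_symm_apply_of_le hx, sumLexCongrRightHom]

theorem extendIoi_apply_coe [LinearOrder α] [LE β] {a : α} (e : β ≃o Ioi a) (f : β ≃o β)
    (b : β) : extendIoi a e f (e b) = e (f b) := by
  simp [extendIoi, sumLexIicIoi_symm_apply_of_lt (e b).2, sumLexCongrRightHom]

end OrderIso

section LeftOrdered

variable (G β : Type*) [Group G] [Preorder G] [MulLeftMono G] [Preorder β]

def mulLeftLexHom : G →* (G ×ₗ β ≃o G ×ₗ β) where
  toFun g := Prod.Lex.prodLexCongr (OrderIso.mulLeft g) (OrderIso.refl β)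
  map_one' := by ext; simp [Prod.map]
  map_mul' g h := by ext; simp [Prod.map, RelIso.mul_apply, mul_assoc]

variable {G β}

theorem mulLeftLexHom_apply_ne {g : G} (hg : g ≠ 1) (p : G ×ₗ β) :
    mulLeftLexHom G β g p ≠ p := fun h =>
  hg (by simpa [mulLeftLexHom] using congrArg (fun p => (ofLex p).1) h)

end LeftOrdered

section RatCast

variable {K : Type*} [Field K] [LinearOrder K] [IsStrictOrderedRing K] [Archimedean K]

theorem Monotone.eq_id_of_forall_ratCast {φ : K → K} (hφ : Monotone φ)
    (h : ∀ q : ℚ, φ q = q) : φ = id := by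
  funext x
  refine le_antisymm (le_of_forall_lt_rat_imp_le fun q hq => ?_)
    (le_of_forall_rat_lt_imp_le fun q hq => ?_)
  · simpa [h] using hφ hq.le
  · simpa [h] using hφ hq.le

theorem OrderIso.ext_ratCast {f g : K ≃o K} (h : ∀ q : ℚ, f q = g q) : f = g := by
  have := (f.symm.monotone.comp g.monotone).eq_id_of_forall_ratCast fun q => by simp [← h]
  ext x
  simpa using congrArg f (congrFun this x).symm

end RatCast

namespace OrderIso

noncomputable def ratExtendFun (f : ℚ ≃o ℚ) (x : ℝ) : ℝ :=
  sSup ((↑) ∘ f '' ((↑) ⁻¹' Iic x))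

theorem nonempty_image_ratCast_preimage_Iic (f : ℚ ≃o ℚ) (x : ℝ) :
    ((↑) ∘ f '' ((↑) ⁻¹' Iic x) : Set ℝ).Nonempty := by
  obtain ⟨q, hq⟩ := exists_rat_lt x
  exact ⟨_, mem_image_of_mem _ (show (q : ℝ) ∈ Iic x from hq.le)⟩

theorem image_ratCast_preimage_Iic_subset (f : ℚ ≃o ℚ) {x : ℝ} {q : ℚ} (hxq : x ≤ q) :
    ((↑) ∘ f '' ((↑) ⁻¹' Iic x) : Set ℝ) ⊆ Iic (f q : ℝ) := by
  rintro _ ⟨p, hp, rfl⟩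
  exact (Rat.cast_le (K := ℝ)).2 (f.monotone ((Rat.cast_le (K := ℝ)).1 (le_trans hp hxq)))

theorem bddAbove_image_ratCast_preimage_Iic (f : ℚ ≃o ℚ) (x : ℝ) :
    BddAbove ((↑) ∘ f '' ((↑) ⁻¹' Iic x) : Set ℝ) := by
  obtain ⟨q, hq⟩ := exists_rat_gt x
  exact ⟨_, image_ratCast_preimage_Iic_subset f hq.le⟩

theorem ratExtendFun_monotone (f : ℚ ≃o ℚ) : Monotone (ratExtendFun f) := fun _ y hxy =>
  csSup_le_csSup (bddAbove_image_ratCast_preimage_Iic f y)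
    (nonempty_image_ratCast_preimage_Iic f _) (image_mono (preimage_mono (Iic_subset_Iic.2 hxy)))

theorem ratExtendFun_ratCast (f : ℚ ≃o ℚ) (q : ℚ) : ratExtendFun f q = f q :=
  le_antisymm (csSup_le (nonempty_image_ratCast_preimage_Iic f q)
    (image_ratCast_preimage_Iic_subset f le_rfl))
    (le_csSup (bddAbove_image_ratCast_preimage_Iic f q) (mem_image_of_mem _ (le_refl (q : ℝ))))

theorem ratExtendFun_leftInverse (f : ℚ ≃o ℚ) :
    Function.LeftInverse (ratExtendFun f.symm) (ratExtendFun f) :=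
  congrFun <| ((ratExtendFun_monotone f.symm).comp
    (ratExtendFun_monotone f)).eq_id_of_forall_ratCast fun q => by simp [ratExtendFun_ratCast]

noncomputable def ratExtendIso (f : ℚ ≃o ℚ) : ℝ ≃o ℝ :=
  Equiv.toOrderIso
    ⟨ratExtendFun f, ratExtendFun f.symm, ratExtendFun_leftInverse f,
      by simpa only [symm_symm] using (ratExtendFun_leftInverse f.symm).rightInverse⟩
    (ratExtendFun_monotone f) (ratExtendFun_monotone f.symm)

@[simp]
theorem ratExtendIso_ratCast (f : ℚ ≃o ℚ) (q : ℚ) : ratExtendIso f q = f q :=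
  ratExtendFun_ratCast f q

noncomputable def ratExtend : (ℚ ≃o ℚ) →* (ℝ ≃o ℝ) where
  toFun := ratExtendIso
  map_one' := ext_ratCast fun q => by simp
  map_mul' f g := ext_ratCast fun q => by simp [RelIso.mul_apply]

@[simp]
theorem ratExtend_ratCast (f : ℚ ≃o ℚ) (q : ℚ) : ratExtend f q = f q :=
  ratExtendFun_ratCast f q

theorem frequently_ratExtend_apply_ne {f : ℚ ≃o ℚ} (hf : ∀ q, f q ≠ q) :
    ∃ᶠ x in atBot, ratExtend f x ≠ x := by
  refine frequently_atBot.2 fun a => ?_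
  obtain ⟨q, hq⟩ := exists_rat_lt a
  exact ⟨q, hq.le, by simpa using hf q⟩

end OrderIso

noncomputable def extendIoiExp : (ℝ ≃o ℝ) →* (ℝ ≃o ℝ) :=
  OrderIso.extendIoi 0 Real.expOrderIso

theorem extendIoiExp_apply_zero (f : ℝ ≃o ℝ) : extendIoiExp f 0 = 0 :=
  OrderIso.extendIoi_apply_of_le _ f le_rfl

theorem extendIoiExp_apply_exp (f : ℝ ≃o ℝ) (x : ℝ) :
    extendIoiExp f (Real.exp x) = Real.exp (f x) :=
  OrderIso.extendIoi_apply_coe Real.expOrderIso f x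

theorem frequently_extendIoiExp_apply_ne {f : ℝ ≃o ℝ} (hf : ∃ᶠ x in atBot, f x ≠ x) :
    ∃ᶠ x in 𝓝 0, extendIoiExp f x ≠ x :=
  Real.tendsto_exp_atBot.frequently <| hf.mono fun x hx => by
    rwa [extendIoiExp_apply_exp, Ne, Real.exp_eq_exp]

def HomeoPlusReal.ofOrderIso : (ℝ ≃o ℝ) →* HomeoPlusReal where
  toFun f := ⟨f.toEquiv, f.continuous, f.symm.continuous, f.strictMono⟩
  map_one' := rfl
  map_mul' _ _ := rfl

/-- A countable left-orderable group admits a faithful action on `ℝ` by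
orientation-preserving homeomorphisms such that every element fixes `0`, and
every nonidentity element has nontrivial germ at `0` (there is no neighborhood
of `0` on which it restricts to the identity). -/
theorem exists_faithful_action_fixing_zero_nontrivial_germ {G : Type*} [Group G]
    [Countable G] (hG : IsLeftOrderable G) :
    ∃ h : G →* HomeoPlusReal, Function.Injective h ∧
      (∀ g : G, ((h g : Equiv.Perm ℝ)) 0 = 0) ∧
      (∀ g : G, g ≠ 1 → ∀ u ∈ nhds (0 : ℝ), ∃ x ∈ u, ((h g : Equiv.Perm ℝ)) x ≠ x) := by
  obtain ⟨r, hr⟩ := hG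
  let _ := r
  have : MulLeftMono G := ⟨covariant_le_of_covariant_lt _ _ _ hr⟩
  have : Countable (G ×ₗ ℚ) := inferInstanceAs (Countable (G × ℚ))
  have : Nonempty (G ×ₗ ℚ) := inferInstanceAs (Nonempty (G × ℚ))
  obtain ⟨e⟩ := Order.iso_of_countable_dense (G ×ₗ ℚ) ℚ
  let φ : G →* (ℚ ≃o ℚ) := (OrderIso.autCongr e).toMonoidHom.comp (mulLeftLexHom G ℚ)
  have hφ (g : G) (hg : g ≠ 1) (q : ℚ) : φ g q ≠ q := fun h =>
    mulLeftLexHom_apply_ne hg (e.symm q) (by simpa [φ] using congrArg e.symm h)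
  let ρ := HomeoPlusReal.ofOrderIso.comp (extendIoiExp.comp (OrderIso.ratExtend.comp φ))
  have hρ (g : G) (x : ℝ) :
      (ρ g : Equiv.Perm ℝ) x = extendIoiExp (OrderIso.ratExtend (φ g)) x := rfl
  have hgerm (g : G) (hg : g ≠ 1) : ∃ᶠ x in 𝓝 0, (ρ g : Equiv.Perm ℝ) x ≠ x := by
    simpa only [hρ] using
      frequently_extendIoiExp_apply_ne (OrderIso.frequently_ratExtend_apply_ne (hφ g hg))
  refine ⟨ρ, (injective_iff_map_eq_one ρ).2 fun g hg => not_not.1 fun hne => ?_,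
    fun g => (hρ g 0).trans (extendIoiExp_apply_zero _),
    fun g hg _ => frequently_iff.1 (hgerm g hg)⟩
  obtain ⟨x, hx⟩ := (hgerm g hne).exists
  exact hx (by rw [hg]; rfl)
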